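/- arXiv:2601.10279 — 2 statements merged into one kernel-verified Lean document; each statement's English description precedes it below -/
import Mathlib

section
/- Let ι be a finite index type with N = card ι, Σ : Matrix ι ι ℝ positive definite, μ : ι → ℝ, and for a subset S of ι let SR²(S) := μ_Sᵀ (Σ_S)⁻¹ μ_S (with Σ_S the principal submatrix and μ_S the subvector). Let T > N be a real number, and let S₁, S₂ be two subsets (models) of equal size k = card S₁ = card S₂ < N. For i = 1, 2, define the GRS value GRS(S_i) := ((T − N)/(N − k)) · ((1 + SR²(ι))/(1 + SR²(S_i)) − 1). Then GRS(S₁) < GRS(S₂) if and only if SR²(S₁) > SR²(S₂): minimizing the cross-sectional mispricing measured by the GRS value over equal-size candidate models is equivalent to maximizing the model's maximal squared Sharpe ratio. -/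
open Matrix

/-
Squared Sharpe ratios are quadratic forms in inverses of positive semidefinite matrices, hence
nonnegative. For models of equal size the GRS value is then `c * (b / (1 + SR²(S)) - 1)` with the
same `b, c > 0`, a strictly decreasing function of `SR²(S)`.
-/

/-- The maximal squared Sharpe ratio of the sub-model indexed by the subset `S`:
`SR²(S) = μ_Sᵀ (Σ_S)⁻¹ μ_S`. -/
noncomputable def subSR {ι : Type*} [Fintype ι] [DecidableEq ι]
    (C : Matrix ι ι ℝ) (μ : ι → ℝ) (S : Finset ι) : ℝ :=
  (fun i : S => μ i) ⬝ᵥ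
    ((C.submatrix (fun i : S => (i : ι)) (fun i : S => (i : ι)))⁻¹ *ᵥ fun i : S => μ i)

lemma Matrix.PosSemidef.dotProduct_inv_mulVec_nonneg {n : Type*} [Fintype n] [DecidableEq n]
    {A : Matrix n n ℝ} (hA : A.PosSemidef) (v : n → ℝ) : 0 ≤ v ⬝ᵥ (A⁻¹ *ᵥ v) := by
  simpa using hA.inv.dotProduct_mulVec_nonneg v

lemma subSR_nonneg {ι : Type*} [Fintype ι] [DecidableEq ι]
    {C : Matrix ι ι ℝ} (hC : C.PosSemidef) (μ : ι → ℝ) (S : Finset ι) :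
    0 ≤ subSR C μ S :=
  (hC.submatrix _).dotProduct_inv_mulVec_nonneg _

lemma strictAntiOn_mul_div_one_add_sub_one {b c : ℝ} (hb : 0 < b) (hc : 0 < c) :
    StrictAntiOn (fun s : ℝ => c * (b / (1 + s) - 1)) (Set.Ioi (-1)) := by
  intro x hx y _ hxy
  have hx' : 0 < 1 + x := by linarith [Set.mem_Ioi.mp hx]
  beta_reduce
  gcongr

/-- **GRS comparison of equal-size models is equivalent to Sharpe-ratio comparison.**
For two candidate models `S₁, S₂` of equal size `k < N` in a universe with positive
definite covariance, and `T > N`, the GRS value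
`GRS(S) = ((T − N)/(N − k)) ((1 + SR²(ι))/(1 + SR²(S)) − 1)` satisfies
`GRS(S₁) < GRS(S₂) ↔ SR²(S₂) < SR²(S₁)`. -/
theorem grs_lt_iff_sharpe_gt {ι : Type*} [Fintype ι] [DecidableEq ι]
    (C : Matrix ι ι ℝ) (hPD : C.PosDef) (μ : ι → ℝ)
    (T : ℝ) (hT : (Fintype.card ι : ℝ) < T)
    (S₁ S₂ : Finset ι) (hcard : S₁.card = S₂.card)
    (hk : S₁.card < Fintype.card ι) :
    let N : ℝ := Fintype.card ι
    let SRfull : ℝ := μ ⬝ᵥ (C⁻¹ *ᵥ μ)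
    let GRS : Finset ι → ℝ := fun S =>
      ((T - N) / (N - (S.card : ℝ))) * ((1 + SRfull) / (1 + subSR C μ S) - 1)
    GRS S₁ < GRS S₂ ↔ subSR C μ S₂ < subSR C μ S₁ := by
  intro N SRfull GRS
  have hkN : (S₁.card : ℝ) < N := Nat.cast_lt.mpr hk
  have hcoef : 0 < (T - N) / (N - S₁.card) := div_pos (by linarith) (by linarith)
  have hnum : 0 < 1 + SRfull := by
    linarith [hPD.posSemidef.dotProduct_inv_mulVec_nonneg μ]
  have hmem (S : Finset ι) : subSR C μ S ∈ Set.Ioi (-1) := by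
    rw [Set.mem_Ioi]
    linarith [subSR_nonneg hPD.posSemidef μ S]
  simp only [GRS, ← hcard]
  exact (strictAntiOn_mul_div_one_add_sub_one hnum hcoef).lt_iff_gt (hmem S₁) (hmem S₂)
end

section
/- Let Σ be an n×n real positive definite matrix and μ ∈ ℝ^n. For j = 1, 2, let e_j be a bijection identifying the index set with the disjoint sum of model j's assets (size m_j) and its complement (size n − m_j); write the reindexed covariance as Σ^(j) = fromBlocks A_j B_j B_jᵀ D_j and the reindexed means as (μ₁^(j), μ₂^(j)), and set α_j = μ₂^(j) − B_jᵀ A_j⁻¹ μ₁^(j) and Σ_{ε,j} = D_j − B_jᵀ A_j⁻¹ B_j. Then α₁ᵀ Σ_{ε,1}⁻¹ α₁ < α₂ᵀ Σ_{ε,2}⁻¹ α₂ if and only if μ₁^(1)ᵀ A₁⁻¹ μ₁^(1) > μ₁^(2)ᵀ A₂⁻¹ μ₁^(2); that is, model 1 has strictly smaller alpha-based mispricing with respect to the assets outside it than model 2 exactly when model 1 has the larger maximal squared Sharpe ratio, so the additional test assets are irrelevant for the comparison. -/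
/-!
Gibbons–Ross–Shanken: for every model, the squared Sharpe ratio of the whole universe splits as
`μᵀ Σ⁻¹ μ = μ₁ᵀ A⁻¹ μ₁ + αᵀ Σ_ε⁻¹ α`, which is the block (Schur complement) decomposition of the
quadratic form of `Σ⁻¹`. The left side does not depend on the model, so a smaller alpha term is
the same as a larger model Sharpe ratio.
-/

open Matrix

namespace Matrix

section CommRing

variable {R m k n : Type*} [CommRing R] [Fintype m] [Fintype k] [Fintype n]
  [DecidableEq m] [DecidableEq k] [DecidableEq n]

theorem dotProduct_inv_mulVec_submatrix_equiv (M : Matrix n n R) (e : m ≃ n) (v : n → R) :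
    (v ∘ e) ⬝ᵥ ((M.submatrix e e)⁻¹ *ᵥ (v ∘ e)) = v ⬝ᵥ (M⁻¹ *ᵥ v) := by
  rw [inv_submatrix_equiv, submatrix_mulVec_equiv, Function.comp_assoc, e.self_comp_symm,
    Function.comp_id, comp_equiv_dotProduct_comp_equiv]

variable {A : Matrix m m R} {B : Matrix m k R} {C : Matrix k m R} {D : Matrix k k R}

theorem isUnit_det_fromBlocks (hA : IsUnit A.det) (hS : IsUnit (D - C * A⁻¹ * B).det) :
    IsUnit (fromBlocks A B C D).det := by
  have := invertibleOfIsUnitDet A hA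
  rw [det_fromBlocks₁₁, invOf_eq_nonsing_inv]
  exact hA.mul hS

theorem fromBlocks_mulVec_schur_solution (hA : IsUnit A.det)
    (hS : IsUnit (D - C * A⁻¹ * B).det) (ν : m → R) (ρ : k → R) :
    let w := (D - C * A⁻¹ * B)⁻¹ *ᵥ (ρ - C *ᵥ (A⁻¹ *ᵥ ν))
    fromBlocks A B C D *ᵥ Sum.elim (A⁻¹ *ᵥ (ν - B *ᵥ w)) w = Sum.elim ν ρ := by
  intro w
  have hw : (D - C * A⁻¹ * B) *ᵥ w = ρ - C *ᵥ (A⁻¹ *ᵥ ν) := by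
    rw [mulVec_mulVec, mul_nonsing_inv _ hS, one_mulVec]
  rw [fromBlocks_mulVec, Sum.elim_comp_inl, Sum.elim_comp_inr, mulVec_mulVec,
    mul_nonsing_inv _ hA, one_mulVec, sub_add_cancel]
  congr 1
  rw [sub_mulVec, ← mulVec_mulVec, ← mulVec_mulVec, eq_sub_iff_add_eq] at hw
  rw [mulVec_sub, mulVec_sub, ← hw]
  abel

theorem sumElim_dotProduct_inv_fromBlocks_mulVec (hA : IsUnit A.det)
    (hS : IsUnit (D - C * A⁻¹ * B).det) (ν : m → R) (ρ : k → R) :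
    Sum.elim ν ρ ⬝ᵥ ((fromBlocks A B C D)⁻¹ *ᵥ Sum.elim ν ρ) =
      ν ⬝ᵥ (A⁻¹ *ᵥ ν) +
        (ρ - ν ᵥ* (A⁻¹ * B)) ⬝ᵥ ((D - C * A⁻¹ * B)⁻¹ *ᵥ (ρ - C *ᵥ (A⁻¹ *ᵥ ν))) := by
  set w := (D - C * A⁻¹ * B)⁻¹ *ᵥ (ρ - C *ᵥ (A⁻¹ *ᵥ ν))
  have hsol : (fromBlocks A B C D)⁻¹ *ᵥ Sum.elim ν ρ = Sum.elim (A⁻¹ *ᵥ (ν - B *ᵥ w)) w := by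
    rw [← fromBlocks_mulVec_schur_solution hA hS ν ρ, mulVec_mulVec,
      nonsing_inv_mul _ (isUnit_det_fromBlocks hA hS), one_mulVec]
  rw [hsol, sumElim_dotProduct_sumElim, mulVec_sub, dotProduct_sub, sub_dotProduct,
    mulVec_mulVec, dotProduct_mulVec ν (A⁻¹ * B)]
  ring

end CommRing

variable {m k n : Type*} [Fintype m] [Fintype k] [Fintype n]
  [DecidableEq m] [DecidableEq k] [DecidableEq n]
  {A : Matrix m m ℝ} {B : Matrix m k ℝ} {D : Matrix k k ℝ}

theorem PosDef.sumElim_dotProduct_inv_fromBlocks_mulVec (hM : (fromBlocks A B Bᵀ D).PosDef)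
    (ν : m → ℝ) (ρ : k → ℝ) :
    Sum.elim ν ρ ⬝ᵥ ((fromBlocks A B Bᵀ D)⁻¹ *ᵥ Sum.elim ν ρ) =
      ν ⬝ᵥ (A⁻¹ *ᵥ ν) + (ρ - Bᵀ *ᵥ (A⁻¹ *ᵥ ν)) ⬝ᵥ
        ((D - Bᵀ * A⁻¹ * B)⁻¹ *ᵥ (ρ - Bᵀ *ᵥ (A⁻¹ *ᵥ ν))) := by
  have hA : A.PosDef := hM.submatrix Sum.inl_injective
  have := invertibleOfIsUnitDet A hA.det_pos.ne'.isUnit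
  have hS : IsUnit (D - Bᵀ * A⁻¹ * B).det := by
    have hdet := hM.det_pos
    rw [det_fromBlocks₁₁, invOf_eq_nonsing_inv] at hdet
    exact isUnit_of_mul_isUnit_right hdet.ne'.isUnit
  have hsymm : ν ᵥ* (A⁻¹ * B) = Bᵀ *ᵥ (A⁻¹ *ᵥ ν) := by
    rw [← vecMul_vecMul, ← mulVec_transpose, ← mulVec_transpose, transpose_nonsing_inv,
      (isHermitian_iff_isSymm.mp hA.isHermitian).eq]
  rw [Matrix.sumElim_dotProduct_inv_fromBlocks_mulVec hA.det_pos.ne'.isUnit hS, hsymm]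

theorem PosDef.dotProduct_inv_mulVec_eq_of_submatrix_eq_fromBlocks {V : Matrix n n ℝ}
    (hV : V.PosDef) (e : m ⊕ k ≃ n) (hVe : V.submatrix e e = fromBlocks A B Bᵀ D)
    {μ : n → ℝ} {ν : m → ℝ} {ρ : k → ℝ} (hμ : μ ∘ e = Sum.elim ν ρ) :
    μ ⬝ᵥ (V⁻¹ *ᵥ μ) = ν ⬝ᵥ (A⁻¹ *ᵥ ν) + (ρ - Bᵀ *ᵥ (A⁻¹ *ᵥ ν)) ⬝ᵥ
        ((D - Bᵀ * A⁻¹ * B)⁻¹ *ᵥ (ρ - Bᵀ *ᵥ (A⁻¹ *ᵥ ν))) := by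
  rw [← dotProduct_inv_mulVec_submatrix_equiv V e, hμ, hVe]
  exact (hVe ▸ hV.submatrix e.injective).sumElim_dotProduct_inv_fromBlocks_mulVec ν ρ

end Matrix

/-- **Test assets are irrelevant for model comparison (Barillas–Shanken).**
For two models of the same positive definite universe, reindexed via bijections
`e₁, e₂` so that each model's assets come first, with block covariances
`fromBlocks Aⱼ Bⱼ Bⱼᵀ Dⱼ`, means `(μ₁ⱼ, μ₂ⱼ)`, spanning-regression alphas
`αⱼ = μ₂ⱼ − Bⱼᵀ Aⱼ⁻¹ μ₁ⱼ` and residual covariances `Σεⱼ = Dⱼ − Bⱼᵀ Aⱼ⁻¹ Bⱼ`: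
model 1 has strictly smaller alpha-based mispricing than model 2 iff it has the
strictly larger maximal squared Sharpe ratio. -/
theorem alpha_mispricing_lt_iff_sharpe_gt {n m₁ k₁ m₂ k₂ : ℕ}
    (C : Matrix (Fin n) (Fin n) ℝ) (hPD : C.PosDef) (μ : Fin n → ℝ)
    (e₁ : Fin m₁ ⊕ Fin k₁ ≃ Fin n) (e₂ : Fin m₂ ⊕ Fin k₂ ≃ Fin n)
    (A₁ : Matrix (Fin m₁) (Fin m₁) ℝ) (B₁ : Matrix (Fin m₁) (Fin k₁) ℝ)
    (D₁ : Matrix (Fin k₁) (Fin k₁) ℝ)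
    (A₂ : Matrix (Fin m₂) (Fin m₂) ℝ) (B₂ : Matrix (Fin m₂) (Fin k₂) ℝ)
    (D₂ : Matrix (Fin k₂) (Fin k₂) ℝ)
    (ν₁ : Fin m₁ → ℝ) (ρ₁ : Fin k₁ → ℝ) (ν₂ : Fin m₂ → ℝ) (ρ₂ : Fin k₂ → ℝ)
    (hC₁ : C.submatrix e₁ e₁ = Matrix.fromBlocks A₁ B₁ B₁ᵀ D₁)
    (hC₂ : C.submatrix e₂ e₂ = Matrix.fromBlocks A₂ B₂ B₂ᵀ D₂)
    (hμ₁ : μ ∘ e₁ = Sum.elim ν₁ ρ₁)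
    (hμ₂ : μ ∘ e₂ = Sum.elim ν₂ ρ₂) :
    let α₁ : Fin k₁ → ℝ := ρ₁ - B₁ᵀ *ᵥ (A₁⁻¹ *ᵥ ν₁)
    let α₂ : Fin k₂ → ℝ := ρ₂ - B₂ᵀ *ᵥ (A₂⁻¹ *ᵥ ν₂)
    let Sε₁ : Matrix (Fin k₁) (Fin k₁) ℝ := D₁ - B₁ᵀ * A₁⁻¹ * B₁
    let Sε₂ : Matrix (Fin k₂) (Fin k₂) ℝ := D₂ - B₂ᵀ * A₂⁻¹ * B₂
    (α₁ ⬝ᵥ (Sε₁⁻¹ *ᵥ α₁) < α₂ ⬝ᵥ (Sε₂⁻¹ *ᵥ α₂) ↔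
      ν₂ ⬝ᵥ (A₂⁻¹ *ᵥ ν₂) < ν₁ ⬝ᵥ (A₁⁻¹ *ᵥ ν₁)) := by
  intro α₁ α₂ Sε₁ Sε₂
  have split₁ := hPD.dotProduct_inv_mulVec_eq_of_submatrix_eq_fromBlocks e₁ hC₁ hμ₁
  have split₂ := hPD.dotProduct_inv_mulVec_eq_of_submatrix_eq_fromBlocks e₂ hC₂ hμ₂
  constructor <;> intro h <;> linarith
end
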